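/- arXiv:0801.1185 — 3 statements merged into one kernel-verified Lean document; each statement's English description precedes it below -/
import Mathlib

section
/- The divergence function d(x;F) = Σ_{i=1}^K W_i(x) log(W_i(x)/R(y_i;F)) converges to -log R(y_K;F) as x → ∞, where R(y_i;F) = ∫ W_i(x) dF(x) is the output probability mass function under input distribution F, provided R(y_i;F) > 0 for all i. -/
/-!
As `x → ∞` every threshold argument `(q_j - x) / σ` tends to `-∞`, so the Gaussian tail
`Qc` tends to `1` there and the transition probabilities `W_i(x)` tend to the indicator of
`i = K`. Each summand of `d(x;F)` is `g(W_i(x))` with `g t = t log (t / c)` continuous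
(even at `t = 0`), so the limit is `1 · log (1 / R(y_K;F)) = -log R(y_K;F)`.
-/

open MeasureTheory Filter Finset

/-- Complementary standard Gaussian CDF. -/
noncomputable def Qc (x : ℝ) : ℝ :=
  ∫ t in Set.Ioi x, Real.exp (-t ^ 2 / 2) / Real.sqrt (2 * Real.pi)

/-- Transition probabilities of the AWGN channel with `K`-bin quantizer with thresholds
`q 1 < ⋯ < q (K-1)` (conventions `Q(-∞) = 1`, `Q(∞) = 0`). -/
noncomputable def W (K : ℕ) (q : ℕ → ℝ) (σ : ℝ) (x : ℝ) (i : ℕ) : ℝ :=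
  (if i = 1 then 1 else Qc ((q (i - 1) - x) / σ)) -
    (if i = K then 0 else Qc ((q i - x) / σ))

/-- Output probability mass function under input distribution `F`. -/
noncomputable def R (K : ℕ) (q : ℕ → ℝ) (σ : ℝ) (F : Measure ℝ) (i : ℕ) : ℝ :=
  ∫ x, W K q σ x i ∂F

/-- The divergence `d(x;F)` between the transition PMF at `x` and the output PMF. -/
noncomputable def ddiv (K : ℕ) (q : ℕ → ℝ) (σ : ℝ) (F : Measure ℝ) (x : ℝ) : ℝ :=
  ∑ i ∈ Finset.Icc 1 K, W K q σ x i * Real.log (W K q σ x i / R K q σ F i)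

open Topology ProbabilityTheory

lemma gaussianPDFReal_zero_one (t : ℝ) :
    gaussianPDFReal 0 1 t = Real.exp (-t ^ 2 / 2) / Real.sqrt (2 * Real.pi) := by
  simp [gaussianPDFReal, div_eq_inv_mul]

lemma Qc_eq_setIntegral_gaussianPDFReal (x : ℝ) :
    Qc x = ∫ t in Set.Ioi x, gaussianPDFReal 0 1 t := by
  simp only [Qc, gaussianPDFReal_zero_one]

lemma tendsto_Qc_atBot : Tendsto Qc atBot (𝓝 1) := by
  have h := (aecover_Ioi (μ := volume) tendsto_id).integral_tendsto_of_countably_generated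
    (integrable_gaussianPDFReal 0 1)
  rw [integral_gaussianPDFReal_eq_one 0 one_ne_zero] at h
  simpa only [id, ← Qc_eq_setIntegral_gaussianPDFReal] using h

lemma tendsto_Qc_sub_div_atTop (c : ℝ) {σ : ℝ} (hσ : 0 < σ) :
    Tendsto (fun x => Qc ((c - x) / σ)) atTop (𝓝 1) :=
  tendsto_Qc_atBot.comp
    ((tendsto_atBot_add_const_left _ c tendsto_neg_atTop_atBot).atBot_div_const hσ)

lemma tendsto_W_atTop (K : ℕ) (q : ℕ → ℝ) {σ : ℝ} (hσ : 0 < σ) (i : ℕ) :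
    Tendsto (fun x => W K q σ x i) atTop (𝓝 (if i = K then 1 else 0)) := by
  have hlower : Tendsto (fun x => if i = 1 then (1 : ℝ) else Qc ((q (i - 1) - x) / σ)) atTop
      (𝓝 1) := by
    split_ifs
    · exact tendsto_const_nhds
    · exact tendsto_Qc_sub_div_atTop _ hσ
  have hupper : Tendsto (fun x => if i = K then (0 : ℝ) else Qc ((q i - x) / σ)) atTop
      (𝓝 (if i = K then 0 else 1)) := by
    split_ifs
    · exact tendsto_const_nhds
    · exact tendsto_Qc_sub_div_atTop _ hσ
  have hlimit : (if i = K then (1 : ℝ) else 0) = 1 - if i = K then 0 else 1 := by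
    split_ifs <;> norm_num
  rw [hlimit]
  exact hlower.sub hupper

lemma Real.continuous_mul_log_div (c : ℝ) : Continuous fun t : ℝ => t * Real.log (t / c) := by
  have h : (fun t : ℝ => t * Real.log (t / c)) = fun t => c * (t / c * Real.log (t / c)) := by
    funext t
    rcases eq_or_ne c 0 with rfl | hc
    -- both sides vanish, as `t / 0 = 0` and `log 0 = 0`
    · simp
    · rw [← mul_assoc, mul_div_cancel₀ t hc]
  rw [h]
  exact continuous_const.mul (Real.continuous_mul_log.comp (continuous_id.div_const c))

theorem divergence_limit_general (K : ℕ) (hK : 1 ≤ K) (q : ℕ → ℝ) (σ : ℝ) (hσ : 0 < σ)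
    (F : Measure ℝ) :
    Tendsto (ddiv K q σ F) atTop (nhds (-Real.log (R K q σ F K))) := by
  have h : Tendsto (ddiv K q σ F) atTop (𝓝 (∑ i ∈ Icc 1 K,
      (if i = K then 1 else 0) * Real.log ((if i = K then 1 else 0) / R K q σ F i))) :=
    tendsto_finsetSum _ fun i _ =>
      ((Real.continuous_mul_log_div _).tendsto _).comp (tendsto_W_atTop K q hσ i)
  convert h using 2
  rw [sum_eq_single_of_mem K (mem_Icc.mpr ⟨hK, le_rfl⟩) fun i _ hi => by simp [hi]]
  simp [Real.log_inv]

theorem divergence_limit (K : ℕ) (hK : 1 ≤ K) (q : ℕ → ℝ) (σ : ℝ) (hσ : 0 < σ)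
    (hq : ∀ j, 1 ≤ j → j < K - 1 → q j < q (j + 1))
    (F : Measure ℝ) [IsProbabilityMeasure F]
    (hR : ∀ i ∈ Finset.Icc 1 K, 0 < R K q σ F i) :
    Tendsto (ddiv K q σ F) atTop (nhds (-Real.log (R K q σ F K))) :=
  divergence_limit_general K hK q σ hσ F
end

section
/- Suppose F* maximizes the mutual information I(F) over average-power-constrained distributions, and there exist γ* ≥ 0 and a finite A_0 such that d(x;F*) < L := -log R(y_K;F*) for all x > A_0, where d(x;F*) + γ*(P - x²) ≤ I(F*) = C for all x with equality on the support of F*. Then there exists a finite A_2* such that every point of the support of F* is at most A_2*; i.e., the support of F* is bounded above. -/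
open MeasureTheory Filter Finset

/-- The support of a measure: points all of whose neighborhoods have positive measure. -/
def msupport (F : Measure ℝ) : Set ℝ := {x | ∀ U ∈ nhds x, 0 < F U}

/-!
If `γ > 0`, then on the support `γ x² = d(x) + γ P - C`, and `d` is bounded above near `+∞`
(it converges), so `x²` is bounded on the right part of the support. If `γ = 0`, then `d ≤ C`
everywhere with equality on the support, so `L ≤ C` and every support point maximizes `d`;
since `d < L ≤ C` beyond `A₀`, the support lies below `A₀`.
-/

theorem IsMaxOn.le_of_tendsto_atTop {d : ℝ → ℝ} {x A₀ L : ℝ} (hmax : IsMaxOn d Set.univ x)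
    (hlim : Tendsto d atTop (nhds L)) (hlt : ∀ y, A₀ < y → d y < L) : x ≤ A₀ := by
  by_contra! hx
  have hLx : L ≤ d x := le_of_tendsto' hlim fun y => hmax (Set.mem_univ y)
  linarith [hlt x hx]

theorem bddAbove_setOf_sq_le (T : ℝ) : BddAbove {x : ℝ | x ^ 2 ≤ T} :=
  ⟨√T, fun _ hx => (le_abs_self _).trans (Real.abs_le_sqrt hx)⟩

theorem bddAbove_of_add_mul_sub_sq_eq {d : ℝ → ℝ} {S : Set ℝ} {γ P C : ℝ} (hγ : 0 < γ)
    (hd : IsBoundedUnder (· ≤ ·) atTop d) (hEq : ∀ x ∈ S, d x + γ * (P - x ^ 2) = C) :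
    BddAbove S := by
  obtain ⟨B, hB⟩ := hd
  obtain ⟨M, hM⟩ := eventually_atTop.mp (eventually_map.mp hB)
  refine ((bddAbove_Iio (a := M)).union (bddAbove_setOf_sq_le ((B + γ * P - C) / γ))).mono
    fun x hx => ?_
  rcases lt_or_ge x M with hxM | hxM
  · exact Or.inl hxM
  · refine Or.inr ((le_div_iff₀ hγ).mpr ?_)
    linarith [hM x hxM, hEq x hx]

theorem support_bounded_above_general (K : ℕ) (q : ℕ → ℝ) (σ : ℝ)
    (F : Measure ℝ) (P C γ A₀ L : ℝ)
    (hγ : 0 ≤ γ)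
    (hKKT : ∀ x : ℝ, ddiv K q σ F x + γ * (P - x ^ 2) ≤ C)
    (hEq : ∀ x ∈ msupport F, ddiv K q σ F x + γ * (P - x ^ 2) = C)
    (hlim : Tendsto (ddiv K q σ F) atTop (nhds L))
    (hlt : ∀ x, A₀ < x → ddiv K q σ F x < L) :
    ∃ A₂ : ℝ, ∀ x ∈ msupport F, x ≤ A₂ := by
  rcases hγ.eq_or_lt with rfl | hγpos
  · refine ⟨A₀, fun x hx => IsMaxOn.le_of_tendsto_atTop (fun y _ => ?_) hlim hlt⟩
    have hdx := hEq x hx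
    have hdy := hKKT y
    simp only [zero_mul, add_zero] at hdx hdy
    exact hdy.trans_eq hdx.symm
  · exact bddAbove_of_add_mul_sub_sq_eq hγpos hlim.isBoundedUnder_le hEq

theorem support_bounded_above (K : ℕ) (hK : 1 ≤ K) (q : ℕ → ℝ) (σ : ℝ) (hσ : 0 < σ)
    (hq : ∀ j, 1 ≤ j → j < K - 1 → q j < q (j + 1))
    (F : Measure ℝ) [IsProbabilityMeasure F] (P C γ A₀ L : ℝ)
    (hγ : 0 ≤ γ)
    (hC : C = ∫ x, ddiv K q σ F x ∂F)
    (hKKT : ∀ x : ℝ, ddiv K q σ F x + γ * (P - x ^ 2) ≤ C)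
    (hEq : ∀ x ∈ msupport F, ddiv K q σ F x + γ * (P - x ^ 2) = C)
    (hL : L = -Real.log (R K q σ F K))
    (hlim : Tendsto (ddiv K q σ F) atTop (nhds L))
    (hlt : ∀ x, A₀ < x → ddiv K q σ F x < L) :
    ∃ A₂ : ℝ, ∀ x ∈ msupport F, x ≤ A₂ :=
  support_bounded_above_general K q σ F P C γ A₀ L hγ hKKT hEq hlim hlt
end

section
/- For a memoryless channel with continuous input X taking values in a bounded interval [A_1, A_2], finite output alphabet {y_1,...,y_K}, and transition probabilities W_i(x) = P(Y = y_i | X = x) continuous in x, the capacity under an average power constraint E[X²] ≤ P is achieved by a discrete input distribution supported on at most K+1 points. -/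
open MeasureTheory Filter Finset

/-- Mutual information of a channel with input in `ℝ` and finite output alphabet `Fin K`,
with transition probabilities `W`, under input distribution `F` (convention `0 log 0 = 0`). -/
noncomputable def MI {K : ℕ} (W : ℝ → Fin K → ℝ) (F : Measure ℝ) : ℝ :=
  ∑ i : Fin K, ∫ x, W x i * Real.log (W x i / ∫ y, W y i ∂F) ∂F


/-!
The mutual information of `G` is a continuous function of the moment vector `∫ c dG`, where
`c x = (∑ᵢ Wᵢ x log Wᵢ x, x², W₁ x, …, W_{K-1} x)` lives in a space of dimension `K + 1`
(`W₀` is determined by the others). These moment vectors lie in the convex hull `S` of the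
curve `c '' [A₁, A₂]`, which is compact, so the objective attains its maximum on the part of
`S` that meets the power constraint. By Carathéodory a point of `S` is a convex combination of
`K + 2` affinely independent points of the curve, and because the curve is connected one of
them can be dropped (Fenchel–Bunt): sliding one atom along the curve towards another keeps all
barycentric weights nonnegative until one of them first vanishes. The maximizer is therefore
the moment vector of a measure with at most `K + 1` atoms.
-/

open Set Real

variable {E : Type*} [NormedAddCommGroup E] [NormedSpace ℝ E]

section DiscreteMoments

variable {c : ℝ → E} {a b : ℝ}

def discreteMoments (c : ℝ → E) (a b : ℝ) (m : ℕ) : Set E :=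
  (fun p : (Fin m → ℝ) × (Fin m → ℝ) => ∑ j, p.1 j • c (p.2 j)) ''
    (stdSimplex ℝ (Fin m) ×ˢ univ.pi fun _ => Icc a b)

theorem isCompact_discreteMoments (hc : ContinuousOn c (Icc a b)) (m : ℕ) :
    IsCompact (discreteMoments c a b m) := by
  refine ((isCompact_stdSimplex ℝ _).prod
    (isCompact_univ_pi fun _ => isCompact_Icc)).image_of_continuousOn ?_
  refine continuousOn_finsetSum _ fun j _ => ?_
  exact (continuous_apply j).comp_continuousOn continuous_fst.continuousOn |>.smul
    (hc.comp (continuous_apply j |>.comp continuous_snd).continuousOn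
      fun p hp => hp.2 j (mem_univ j))

theorem discreteMoments_subset_convexHull (m : ℕ) :
    discreteMoments c a b m ⊆ convexHull ℝ (c '' Icc a b) := by
  rintro _ ⟨⟨w, t⟩, ⟨hw, ht⟩, rfl⟩
  exact (convex_convexHull ℝ _).sum_mem (fun j _ => hw.1 j) hw.2
    fun j _ => subset_convexHull ℝ _ (mem_image_of_mem c (ht j (mem_univ j)))

theorem sum_smul_mem_discreteMoments {ι : Type*} [Fintype ι] {w ξ : ι → ℝ}
    (hw : w ∈ stdSimplex ℝ ι) (hξ : ∀ i, ξ i ∈ Icc a b) :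
    ∑ i, w i • c (ξ i) ∈ discreteMoments c a b (Fintype.card ι) := by
  let e := (Fintype.equivFin ι).symm
  refine ⟨(w ∘ e, ξ ∘ e), ⟨⟨fun j => hw.1 _, ?_⟩, fun j _ => hξ _⟩, ?_⟩
  · simpa [hw.2] using e.sum_comp w
  · exact e.sum_comp fun i => w i • c (ξ i)

theorem sum_smul_mem_discreteMoments_of_eq_zero {ι : Type*} [Fintype ι] [DecidableEq ι]
    {w ξ : ι → ℝ} (hw : w ∈ stdSimplex ℝ ι) (hξ : ∀ i, ξ i ∈ Icc a b) {j : ι} (hj : w j = 0) :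
    ∑ i, w i • c (ξ i) ∈ discreteMoments c a b (Fintype.card ι - 1) := by
  have hsum : ∀ f : ι → E, f j = 0 → ∑ i, f i = ∑ i : {i // i ≠ j}, f i := fun f hf => by
    rw [Fintype.sum_eq_add_sum_subtype_ne f j, hf, zero_add]
  have hw' : (fun i : {i // i ≠ j} => w i) ∈ stdSimplex ℝ {i // i ≠ j} :=
    ⟨fun i => hw.1 i, by rw [← hw.2, Fintype.sum_eq_add_sum_subtype_ne w j, hj, zero_add]⟩
  have hcard : Fintype.card {i // i ≠ j} = Fintype.card ι - 1 := by
    simp only [ne_eq, Fintype.card_subtype_compl, Fintype.card_unique]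
  rw [hsum _ (by simp [hj]), ← hcard]
  exact sum_smul_mem_discreteMoments hw' fun i => hξ i

end DiscreteMoments

section Exchange

variable {ι : Type*} [Fintype ι] [DecidableEq ι]

theorem exists_mem_Icc_barycentric_crossing {w : ι → ℝ} (hw : ∀ i, 0 < w i) {β : ℝ → ι → ℝ}
    (hβ : ∀ i, ContinuousOn (fun τ => β τ i) (Icc 0 1)) {i₀ i₁ : ι} (h : i₀ ≠ i₁)
    (hβ0 : β 0 = Pi.single i₀ 1) (hβ1 : β 1 = Pi.single i₁ 1) :
    ∃ τ ∈ Icc (0 : ℝ) 1, (∀ i, 0 ≤ w i * β τ i₀ - w i₀ * β τ i) ∧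
      ∃ j ≠ i₀, w j * β τ i₀ - w i₀ * β τ j = 0 := by
  set g : ι → ℝ → ℝ := fun i τ => w i * β τ i₀ - w i₀ * β τ i
  have hs : (univ.erase i₀).Nonempty := ⟨i₁, mem_erase.2 ⟨h.symm, mem_univ _⟩⟩
  have hcont : ContinuousOn (fun τ => (univ.erase i₀).inf' hs fun i => g i τ) (Icc 0 1) :=
    ContinuousOn.finset_inf'_apply hs fun i _ =>
      (continuousOn_const.mul (hβ i₀)).sub (continuousOn_const.mul (hβ i))
  have h1 : (univ.erase i₀).inf' hs (fun i => g i 1) ≤ 0 := by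
    refine (inf'_le _ (mem_erase.2 ⟨h.symm, mem_univ i₁⟩)).trans ?_
    simp [g, hβ1, h, (hw i₀).le]
  have h0 : 0 ≤ (univ.erase i₀).inf' hs fun i => g i 0 := by
    refine le_inf' _ _ fun i hi => ?_
    simp [g, hβ0, ne_of_mem_erase hi, (hw i).le]
  obtain ⟨τ, hτ, hτ0⟩ := intermediate_value_Icc' zero_le_one hcont ⟨h1, h0⟩
  refine ⟨τ, hτ, fun i => ?_, ?_⟩
  · rcases eq_or_ne i i₀ with rfl | hi
    · simp
    · exact hτ0 ▸ inf'_le _ (mem_erase.2 ⟨hi, mem_univ i⟩)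
  · obtain ⟨j, hj, hgj⟩ := exists_mem_eq_inf' hs fun i => g i τ
    exact ⟨j, ne_of_mem_erase hj, hgj.symm.trans hτ0⟩

theorem AffineBasis.exists_exchange_along_path [FiniteDimensional ℝ E] (p : AffineBasis ι ℝ E)
    {w : ι → ℝ} (hw : ∀ i, 0 < w i) (hw1 : ∑ i, w i = 1) {i₀ i₁ : ι} (h : i₀ ≠ i₁)
    {γ : ℝ → E} (hγ : ContinuousOn γ (Icc 0 1)) (hγ0 : γ 0 = p i₀) (hγ1 : γ 1 = p i₁) :
    ∃ τ ∈ Icc (0 : ℝ) 1, ∃ μ ∈ stdSimplex ℝ ι, (∃ j, μ j = 0) ∧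
      ∑ i, μ i • Function.update (⇑p) i₀ (γ τ) i = ∑ i, w i • p i := by
  set β : ℝ → ι → ℝ := fun τ i => p.coord i (γ τ)
  obtain ⟨τ, hτ, hg, j, hj, hgj⟩ := exists_mem_Icc_barycentric_crossing hw
    (β := β) (fun i => (continuous_barycentric_coord p i).comp_continuousOn hγ) h
    (by ext i; simp [β, hγ0, p.coord_apply, Pi.single_apply, eq_comm])
    (by ext i; simp [β, hγ1, p.coord_apply, Pi.single_apply, eq_comm])
  have hβsum : ∑ i, β τ i = 1 := p.sum_coord_apply_eq_one _
  have hβp : ∑ i, β τ i • p i = γ τ := p.linear_combination_coord_eq_self _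
  have hβpos : 0 < β τ i₀ := by
    by_contra! hle
    have : ∑ i, β τ i ≤ 0 := sum_nonpos fun i _ => by
      nlinarith [hg i, hw i, hw i₀, mul_nonpos_of_nonneg_of_nonpos (hw i).le hle]
    linarith
  obtain ⟨s, hs⟩ : ∃ s, s * β τ i₀ = w i₀ := ⟨_, div_mul_cancel₀ _ hβpos.ne'⟩
  have hdiv : ∀ i, w i - s * β τ i = (w i * β τ i₀ - w i₀ * β τ i) / β τ i₀ := fun i => by
    rw [eq_div_iff hβpos.ne']
    linear_combination -(β τ i) * hs
  -- `μ` trades the atom `p i₀` for `γ τ = ∑ i, β τ i • p i` at weight `s`, chosen so that the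
  -- old weight of `p i₀` cancels; the crossing property makes the new weights nonnegative.
  set μ : ι → ℝ := fun i => w i - s * β τ i + if i = i₀ then s else 0
  have hμ₀ : μ i₀ = s := by simp [μ, hs]
  have hupd : Function.update (⇑p) i₀ (γ τ) =
      fun i => p i + if i = i₀ then γ τ - p i₀ else 0 := by
    ext i; by_cases hi : i = i₀ <;> simp [hi]
  refine ⟨τ, hτ, μ, ⟨fun i => ?_, ?_⟩, ⟨j, ?_⟩, ?_⟩
  · by_cases hi : i = i₀
    · rw [hi, hμ₀]; nlinarith [hw i₀]
    · simpa [μ, hi, hdiv i] using div_nonneg (hg i) hβpos.le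
  · simp [μ, sum_add_distrib, sum_sub_distrib, ← mul_sum, hw1, hβsum]
  · simp [μ, hj, hdiv j, hgj]
  · calc ∑ i, μ i • Function.update (⇑p) i₀ (γ τ) i
          = ∑ i, μ i • p i + s • (γ τ - p i₀) := by
            simp [hupd, smul_add, sum_add_distrib, hμ₀]
        _ = ∑ i, w i • p i := by
            simp only [μ, add_smul, sub_smul, mul_smul, ite_smul, zero_smul, sum_add_distrib,
              sum_sub_distrib, ← smul_sum, hβp, sum_ite_eq', Finset.mem_univ, ↓reduceIte]
            module

end Exchange

theorem ContinuousOn.integrable_of_measure_compl_eq_zero {X F : Type*} [MeasurableSpace X]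
    [TopologicalSpace X] [OpensMeasurableSpace X] [T2Space X] [NormedAddCommGroup F]
    {μ : Measure X} [IsFiniteMeasure μ] {K : Set X} {g : X → F} (hg : ContinuousOn g K)
    (hK : IsCompact K) (hμ : μ Kᶜ = 0) : Integrable g μ := by
  simpa [IntegrableOn, Measure.restrict_eq_self_of_ae_mem (ae_iff.2 hμ)] using
    hg.integrableOn_compact (μ := μ) hK

section FenchelBunt

variable {c : ℝ → E} {a b : ℝ}

theorem convexHull_image_Icc_subset_biUnion_discreteMoments [FiniteDimensional ℝ E] [Nontrivial E]
    (hc : ContinuousOn c (Icc a b)) :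
    convexHull ℝ (c '' Icc a b) ⊆ ⋃ m ≤ Module.finrank ℝ E, discreteMoments c a b m := by
  classical
  intro v hv
  obtain ⟨ι, _, z, w, hz, hzi, hw0, hw1, rfl⟩ := eq_pos_convex_span_of_mem_convexHull hv
  choose ξ hξ hcξ using fun i => hz (mem_range_self i)
  obtain rfl : z = c ∘ ξ := funext fun i => (hcξ i).symm
  have hw : w ∈ stdSimplex ℝ ι := ⟨fun i => (hw0 i).le, hw1⟩
  have hcard : Fintype.card ι ≤ Module.finrank ℝ E + 1 :=
    hzi.card_le_finrank_succ.trans (Nat.add_le_add_right (Submodule.finrank_le _) 1)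
  rcases hcard.lt_or_eq with hlt | heq
  · exact mem_biUnion (Nat.lt_succ_iff.1 hlt) (sum_smul_mem_discreteMoments hw hξ)
  let p : AffineBasis ι ℝ E := ⟨_, hzi, hzi.affineSpan_eq_top_iff_card_eq_finrank_add_one.2 heq⟩
  have hp : ⇑p = c ∘ ξ := rfl
  have hpos := Module.finrank_pos (R := ℝ) (M := E)
  obtain ⟨i₀, i₁, h⟩ := Fintype.exists_pair_of_one_lt_card (α := ι) (by omega)
  set ℓ := AffineMap.lineMap (k := ℝ) (ξ i₀) (ξ i₁)
  have hℓ : MapsTo ℓ (Icc 0 1) (Icc a b) := fun τ hτ =>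
    (convex_Icc a b).lineMap_mem (hξ i₀) (hξ i₁) hτ
  obtain ⟨τ, hτ, μ, hμ, ⟨j, hj⟩, hsum⟩ := p.exists_exchange_along_path hw0 hw1 h
    (hc.comp AffineMap.lineMap_continuous.continuousOn hℓ) (by simp [hp]) (by simp [hp])
  have hξ' : ∀ i, Function.update ξ i₀ (ℓ τ) i ∈ Icc a b := fun i => by
    by_cases hi : i = i₀ <;> simp [hi, hξ i, hℓ hτ]
  refine mem_biUnion (le_of_eq (by omega : Fintype.card ι - 1 = _)) ?_
  rw [← hp, ← hsum, hp, Function.comp_apply, ← Function.comp_update]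
  exact sum_smul_mem_discreteMoments_of_eq_zero hμ hξ' hj

theorem isCompact_convexHull_image_Icc [FiniteDimensional ℝ E] [Nontrivial E]
    (hc : ContinuousOn c (Icc a b)) : IsCompact (convexHull ℝ (c '' Icc a b)) := by
  rw [(convexHull_image_Icc_subset_biUnion_discreteMoments hc).antisymm
    (iUnion₂_subset fun m _ => discreteMoments_subset_convexHull m)]
  exact (finite_le_nat _).isCompact_biUnion fun m _ => isCompact_discreteMoments hc m

theorem integral_mem_convexHull_image_Icc [FiniteDimensional ℝ E] [Nontrivial E]
    (hc : ContinuousOn c (Icc a b)) {G : Measure ℝ} [IsProbabilityMeasure G]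
    (hG : G (Icc a b)ᶜ = 0) : ∫ x, c x ∂G ∈ convexHull ℝ (c '' Icc a b) := by
  refine (convex_convexHull ℝ _).integral_mem (isCompact_convexHull_image_Icc hc).isClosed ?_
    (hc.integrable_of_measure_compl_eq_zero isCompact_Icc hG)
  filter_upwards [ae_iff.2 hG] with x hx
  exact subset_convexHull ℝ _ (mem_image_of_mem c hx)

end FenchelBunt

section DiscreteMeasure

variable {α : Type*} [MeasurableSpace α] {ι : Type*} [Fintype ι]
  {w : ι → ℝ} {t : ι → α}

theorem sum_ofReal_smul_dirac_apply_eq_one (hw : w ∈ stdSimplex ℝ ι) {s : Set α}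
    (hs : ∀ i, t i ∈ s) : (∑ i, ENNReal.ofReal (w i) • Measure.dirac (t i)) s = 1 := by
  simp [hs, ← ENNReal.ofReal_sum_of_nonneg fun i _ => hw.1 i, hw.2]

theorem isProbabilityMeasure_sum_ofReal_smul_dirac (hw : w ∈ stdSimplex ℝ ι) :
    IsProbabilityMeasure (∑ i, ENNReal.ofReal (w i) • Measure.dirac (t i)) :=
  ⟨sum_ofReal_smul_dirac_apply_eq_one hw fun _ => mem_univ _⟩

theorem integral_sum_ofReal_smul_dirac [MeasurableSingletonClass α] {F : Type*}
    [NormedAddCommGroup F] [NormedSpace ℝ F] [CompleteSpace F] (hw : ∀ i, 0 ≤ w i) (g : α → F) :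
    ∫ x, g x ∂(∑ i, ENNReal.ofReal (w i) • Measure.dirac (t i)) = ∑ i, w i • g (t i) := by
  rw [integral_finsetSum_measure fun i _ =>
    (integrable_dirac enorm_lt_top).smul_measure ENNReal.ofReal_ne_top]
  simp [integral_dirac, ENNReal.toReal_ofReal (hw _)]

end DiscreteMeasure

theorem exists_finitelySupported_isMaxOn_integral [FiniteDimensional ℝ E] [Nontrivial E]
    {c : ℝ → E} {a b : ℝ} (hc : ContinuousOn c (Icc a b)) {C : Set E} (hC : IsClosed C)
    {Φ : E → ℝ} (hΦ : Continuous Φ) (hfeas : ∃ x ∈ Icc a b, c x ∈ C) :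
    ∃ F : Measure ℝ, IsProbabilityMeasure F ∧ F (Icc a b)ᶜ = 0 ∧
      (∃ s : Finset ℝ, s.card ≤ Module.finrank ℝ E ∧ F s = 1) ∧ ∫ x, c x ∂F ∈ C ∧
      ∀ G : Measure ℝ, IsProbabilityMeasure G → G (Icc a b)ᶜ = 0 → ∫ x, c x ∂G ∈ C →
        Φ (∫ x, c x ∂G) ≤ Φ (∫ x, c x ∂F) := by
  obtain ⟨x₀, hx₀, hx₀C⟩ := hfeas
  obtain ⟨v, ⟨hvS, hvC⟩, hmax⟩ :=
    ((isCompact_convexHull_image_Icc hc).inter_right hC).exists_isMaxOn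
      ⟨c x₀, subset_convexHull ℝ _ (mem_image_of_mem c hx₀), hx₀C⟩ hΦ.continuousOn
  obtain ⟨m, hm, ⟨w, t⟩, ⟨hw, ht⟩, rfl⟩ :=
    mem_iUnion₂.1 (convexHull_image_Icc_subset_biUnion_discreteMoments hc hvS)
  set F := ∑ j, ENNReal.ofReal (w j) • Measure.dirac (t j)
  have hF : IsProbabilityMeasure F := isProbabilityMeasure_sum_ofReal_smul_dirac hw
  have hFS : F (Icc a b)ᶜ = 0 := (prob_compl_eq_zero_iff measurableSet_Icc).2
    (sum_ofReal_smul_dirac_apply_eq_one hw fun j => ht j (mem_univ j))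
  have hcF : ∫ x, c x ∂F = ∑ j, w j • c (t j) := integral_sum_ofReal_smul_dirac hw.1 c
  refine ⟨F, hF, hFS, ⟨univ.image t, card_image_le.trans (by simpa using hm),
    sum_ofReal_smul_dirac_apply_eq_one hw fun j => by simp⟩, hcF ▸ hvC,
    fun G _ hGS hGC => hcF ▸ hmax ⟨integral_mem_convexHull_image_Icc hc hGS, hGC⟩⟩

theorem integral_mul_log_div_integral {α : Type*} [MeasurableSpace α] {μ : Measure α}
    {f : α → ℝ} (hf0 : 0 ≤ᵐ[μ] f) (hf : Integrable f μ)
    (hflog : Integrable (fun x => f x * log (f x)) μ) :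
    ∫ x, f x * log (f x / ∫ y, f y ∂μ) ∂μ = ∫ x, f x * log (f x) ∂μ + negMulLog (∫ x, f x ∂μ) := by
  set R := ∫ x, f x ∂μ
  rcases eq_or_ne R 0 with hR | hR
  · have hf_ae : f =ᵐ[μ] 0 := (integral_eq_zero_iff_of_nonneg_ae hf0 hf).1 hR
    have : ∫ x, f x * log (f x) ∂μ = 0 :=
      integral_eq_zero_of_ae (hf_ae.mono fun x hx => by simp [hx])
    simp [hR, this]
  · have hsplit : ∀ x, f x * log (f x / R) = f x * log (f x) - log R * f x := fun x => by
      rcases eq_or_ne (f x) 0 with hx | hx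
      · simp [hx]
      · rw [log_div hx hR]; ring
    simp_rw [hsplit]
    rw [integral_sub hflog (hf.const_mul _), integral_const_mul, negMulLog]
    ring

theorem MI_eq_integral_sum_add_sum_negMulLog {K : ℕ} {W : ℝ → Fin K → ℝ} {G : Measure ℝ}
    (hW0 : ∀ x i, 0 ≤ W x i) (hW : ∀ i, Integrable (fun x => W x i) G)
    (hWlog : ∀ i, Integrable (fun x => W x i * log (W x i)) G) :
    MI W G = ∫ x, ∑ i, W x i * log (W x i) ∂G + ∑ i, negMulLog (∫ x, W x i ∂G) := by
  rw [MI, integral_finsetSum _ fun i _ => hWlog i, ← sum_add_distrib]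
  exact sum_congr rfl fun i _ =>
    integral_mul_log_div_integral (ae_of_all _ (hW0 · i)) (hW i) (hWlog i)

section Channel

variable {k : ℕ}

noncomputable def channelMoments (W : ℝ → Fin (k + 1) → ℝ) (x : ℝ) : ℝ × ℝ × (Fin k → ℝ) :=
  (∑ i, W x i * log (W x i), x ^ 2, fun j => W x j.succ)

noncomputable def miOfMoments (u : ℝ × ℝ × (Fin k → ℝ)) : ℝ :=
  u.1 + negMulLog (1 - ∑ j, u.2.2 j) + ∑ j, negMulLog (u.2.2 j)

theorem continuous_channelMoments {W : ℝ → Fin (k + 1) → ℝ} (hW : ∀ i, Continuous (W · i)) :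
    Continuous (channelMoments W) := by
  unfold channelMoments
  fun_prop

theorem continuous_miOfMoments : Continuous (miOfMoments (k := k)) := by
  unfold miOfMoments
  fun_prop

variable {W : ℝ → Fin (k + 1) → ℝ} {G : Measure ℝ}

theorem integrable_channelMoments [IsFiniteMeasure G] {a b : ℝ} (hW : ∀ i, Continuous (W · i))
    (hG : G (Icc a b)ᶜ = 0) : Integrable (channelMoments W) G :=
  (continuous_channelMoments hW).continuousOn.integrable_of_measure_compl_eq_zero isCompact_Icc hG

theorem integral_channelMoments (h : Integrable (channelMoments W) G) :
    ∫ x, channelMoments W x ∂G =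
      (∫ x, ∑ i, W x i * log (W x i) ∂G, ∫ x, x ^ 2 ∂G, fun j => ∫ x, W x j.succ ∂G) := by
  refine Prod.ext (fst_integral h) (Prod.ext ?_ ?_)
  · rw [snd_integral h]
    exact fst_integral h.snd
  · rw [snd_integral h, snd_integral h.snd]
    exact funext (eval_integral h.snd.snd.eval)

theorem MI_eq_miOfMoments_integral [IsProbabilityMeasure G] {a b : ℝ} (hW0 : ∀ x i, 0 ≤ W x i)
    (hW1 : ∀ x, ∑ i, W x i = 1) (hW : ∀ i, Continuous (W · i)) (hG : G (Icc a b)ᶜ = 0) :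
    MI W G = miOfMoments (∫ x, channelMoments W x ∂G) := by
  have hint : ∀ {g : ℝ → ℝ}, Continuous g → Integrable g G :=
    fun hg => hg.continuousOn.integrable_of_measure_compl_eq_zero isCompact_Icc hG
  have hW₀ : ∫ x, W x 0 ∂G = 1 - ∑ j : Fin k, ∫ x, W x j.succ ∂G := by
    have hW₀' : ∀ x, W x 0 = 1 - ∑ j : Fin k, W x j.succ := fun x => by
      rw [← hW1 x, Fin.sum_univ_succ, add_sub_cancel_right]
    simp_rw [hW₀']
    rw [integral_sub (integrable_const 1) (integrable_finsetSum _ fun j _ => hint (hW j.succ)),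
      integral_finsetSum _ fun j _ => hint (hW j.succ)]
    simp
  rw [MI_eq_integral_sum_add_sum_negMulLog hW0 (fun i => hint (hW i))
      (fun i => hint (by fun_prop)), integral_channelMoments
      (integrable_channelMoments hW hG), miOfMoments, Fin.sum_univ_succ, hW₀]
  ring

end Channel

theorem capacity_achieved_discrete_general (K : ℕ) (A₁ A₂ P : ℝ)
    (W : ℝ → Fin K → ℝ)
    (hW0 : ∀ x i, 0 ≤ W x i)
    (hW1 : ∀ x, ∑ i : Fin K, W x i = 1)
    (hWc : ∀ i, Continuous fun x => W x i)
    (hfeas : ∃ x₀ ∈ Set.Icc A₁ A₂, x₀ ^ 2 ≤ P) :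
    ∃ F : Measure ℝ, IsProbabilityMeasure F ∧ F (Set.Icc A₁ A₂)ᶜ = 0 ∧
      (∫ x, x ^ 2 ∂F) ≤ P ∧
      (∃ s : Finset ℝ, s.card ≤ K + 1 ∧ F ↑s = 1) ∧
      ∀ G : Measure ℝ, IsProbabilityMeasure G → G (Set.Icc A₁ A₂)ᶜ = 0 →
        (∫ x, x ^ 2 ∂G) ≤ P → MI W G ≤ MI W F := by
  obtain _ | k := K
  · simp at hW1
  have hpower : ∀ G : Measure ℝ, IsProbabilityMeasure G → G (Icc A₁ A₂)ᶜ = 0 →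
      (∫ x, channelMoments W x ∂G).2.1 = ∫ x, x ^ 2 ∂G := fun G _ hG => by
    rw [integral_channelMoments (integrable_channelMoments hWc hG)]
  obtain ⟨x₀, hx₀, hx₀P⟩ := hfeas
  obtain ⟨F, hF, hFS, ⟨s, hs, hFs⟩, hFP, hmax⟩ :=
    exists_finitelySupported_isMaxOn_integral (continuous_channelMoments hWc).continuousOn
      (isClosed_le (continuous_fst.comp continuous_snd) continuous_const) continuous_miOfMoments
      (C := {u | u.2.1 ≤ P}) ⟨x₀, hx₀, hx₀P⟩
  refine ⟨F, hF, hFS, hpower F hF hFS ▸ hFP, ⟨s, ?_, hFs⟩,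
    fun G hG hGS hGP => ?_⟩
  · simpa only [Module.finrank_prod, Module.finrank_self, Module.finrank_fin_fun,
      add_comm 1] using hs
  rw [MI_eq_miOfMoments_integral hW0 hW1 hWc hGS, MI_eq_miOfMoments_integral hW0 hW1 hWc hFS]
  exact hmax G hG hGS ((hpower G hG hGS).trans_le hGP)

theorem capacity_achieved_discrete (K : ℕ) (hK : 1 ≤ K) (A₁ A₂ P : ℝ) (hA : A₁ ≤ A₂)
    (W : ℝ → Fin K → ℝ)
    (hW0 : ∀ x i, 0 ≤ W x i)
    (hW1 : ∀ x, ∑ i : Fin K, W x i = 1)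
    (hWc : ∀ i, Continuous fun x => W x i)
    (hfeas : ∃ x₀ ∈ Set.Icc A₁ A₂, x₀ ^ 2 ≤ P) :
    ∃ F : Measure ℝ, IsProbabilityMeasure F ∧ F (Set.Icc A₁ A₂)ᶜ = 0 ∧
      (∫ x, x ^ 2 ∂F) ≤ P ∧
      (∃ s : Finset ℝ, s.card ≤ K + 1 ∧ F ↑s = 1) ∧
      ∀ G : Measure ℝ, IsProbabilityMeasure G → G (Set.Icc A₁ A₂)ᶜ = 0 →
        (∫ x, x ^ 2 ∂G) ≤ P → MI W G ≤ MI W F :=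
  capacity_achieved_discrete_general K A₁ A₂ P W hW0 hW1 hWc hfeas
end
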